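/- Let λ, μ, ν be partitions of m of lengths exactly p, q, r with p = qr, and suppose there exists a pair (S, T) of Littlewood–Richardson multitableaux of shapes λ and μ, same contents (ρ(1),…,ρ(r)), and type ν. Then each ρ(i) has length exactly q and ρ(i)_j ≥ λ_p for all j ∈ {1,…,q}; moreover μ_q ≥ r·λ_p and ν_r ≥ q·λ_p. -/

import Mathlib

/-- A partition: a weakly decreasing, finitely supported sequence of naturals.
`parts i` is the `(i+1)`-st part (0-indexed). -/
structure YPartition where
  parts : ℕ → ℕ
  antitone : ∀ ⦃i j : ℕ⦄, i ≤ j → parts j ≤ parts i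
  support_finite : Set.Finite {i | parts i ≠ 0}

/-- The size `|λ|` of a partition. -/
noncomputable def psize (l : YPartition) : ℕ :=
  l.support_finite.toFinset.sum l.parts

/-- The length `ℓ(λ)`: the number of positive parts. -/
noncomputable def plength (l : YPartition) : ℕ :=
  l.support_finite.toFinset.card

/-- The empty partition. -/
def pempty : YPartition :=
  ⟨fun _ => 0, fun _ _ _ => le_rfl, by simp⟩

/-- λ + (t^p): add `t` to each of the first `p` parts. -/
def padd (l : YPartition) (p t : ℕ) : YPartition where
  parts i := l.parts i + (if i < p then t else 0)
  antitone := by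
    intro i j h
    have h1 := l.antitone h
    try dsimp only
    split_ifs <;> omega
  support_finite := by
    apply Set.Finite.subset (l.support_finite.union (Set.finite_Iio p))
    intro i hi
    simp only [Set.mem_setOf_eq] at hi
    simp only [Set.mem_union, Set.mem_setOf_eq, Set.mem_Iio]
    by_contra hc
    push_neg at hc
    rw [if_neg (by omega : ¬ i < p)] at hi
    omega

/-- Membership of a cell `(i, j)` (0-indexed) in the Young diagram of `λ`. -/
def memD (l : YPartition) (c : ℕ × ℕ) : Prop := c.2 < l.parts c.1

/-- The conjugate partition. -/
noncomputable def pconj (l : YPartition) : YPartition where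
  parts j := Set.ncard {i | j < l.parts i}
  antitone := by
    intro j j' h
    apply Set.ncard_le_ncard
    · intro i hi
      exact lt_of_le_of_lt h hi
    · exact l.support_finite.subset (by intro i hi; simp only [Set.mem_setOf_eq] at *; omega)
  support_finite := by
    apply Set.Finite.subset (Set.finite_Iio (l.parts 0))
    intro j hj
    simp only [Set.mem_setOf_eq] at hj
    obtain ⟨i, hi⟩ := Set.nonempty_of_ncard_ne_zero hj
    exact Set.mem_Iio.mpr (lt_of_lt_of_le hi (l.antitone (Nat.zero_le i)))

/-- The intersection `λ ∩ μ` of two Young diagrams, as a partition. -/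
def pmin (l m : YPartition) : YPartition where
  parts i := min (l.parts i) (m.parts i)
  antitone := fun _ _ h => min_le_min (l.antitone h) (m.antitone h)
  support_finite := l.support_finite.subset (by intro i hi; simp only [Set.mem_setOf_eq] at *; omega)

/-- The value of the permutation character `φ^c` of `S_m` (induced from the trivial
character of the Young subgroup of type `c`) at `σ`: the number of `σ`-invariant
functions `Fin m → ℕ` with fibre sizes prescribed by `c`. -/
noncomputable def permChar (m : ℕ) (c : ℕ → ℕ) (σ : Equiv.Perm (Fin m)) : ℚ :=
  (Set.ncard {f : Fin m → ℕ | (∀ x, f (σ x) = f x) ∧ ∀ k, Set.ncard {x | f x = k} = c k} : ℚ)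

/-- The entries of the Jacobi–Trudi matrix attached to the skew shape `λ/δ`. -/
def jtEntry (l d : YPartition) (p : ℕ) (w : Equiv.Perm (Fin p)) (k : ℕ) : ℤ :=
  if hk : k < p then
    (l.parts k : ℤ) - (d.parts (w ⟨k, hk⟩) : ℤ) + ((w ⟨k, hk⟩ : ℕ) : ℤ) - (k : ℤ)
  else 0

open Classical in
/-- The skew character `χ^{λ/δ}` of `S_m`, defined via the Jacobi–Trudi determinant
expansion into permutation characters. Here `p` bounds the number of rows used. -/
noncomputable def skewChar (m p : ℕ) (l d : YPartition) (σ : Equiv.Perm (Fin m)) : ℚ :=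
  ∑ w : Equiv.Perm (Fin p),
    if ∀ k, 0 ≤ jtEntry l d p w k then
      ((Equiv.Perm.sign w : ℤ) : ℚ) * permChar m (fun k => (jtEntry l d p w k).toNat) σ
    else 0

/-- The irreducible character `χ^λ` of `S_m`. -/
noncomputable def irrChar (m : ℕ) (l : YPartition) (σ : Equiv.Perm (Fin m)) : ℚ :=
  skewChar m (plength l) l pempty σ

/-- The inner product of class functions on `S_m`. -/
noncomputable def cinner (m : ℕ) (f g : Equiv.Perm (Fin m) → ℚ) : ℚ :=
  (∑ σ : Equiv.Perm (Fin m), f σ * g σ) / (Nat.factorial m : ℚ)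

/-- The Kronecker coefficient `k(λ,μ,ν) = ⟨χ^λ ⊗ χ^μ, χ^ν⟩`. -/
noncomputable def kron (m : ℕ) (l mu nu : YPartition) : ℚ :=
  cinner m (fun σ => irrChar m l σ * irrChar m mu σ) (irrChar m nu)

/-- The cell `(i,j)` lies in the skew shape with outer row lengths `outer` and
inner row lengths `inner`. -/
def InSkew (outer inner : ℕ → ℕ) (c : ℕ × ℕ) : Prop :=
  inner c.1 ≤ c.2 ∧ c.2 < outer c.1

/-- `T` is a semistandard skew tableau of the given skew shape (entries `≥ 1` on the
shape, `0` off it; rows weakly increase, columns strictly increase). -/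
def IsSSYT (outer inner : ℕ → ℕ) (T : ℕ × ℕ → ℕ) : Prop :=
  (∀ c, ¬ InSkew outer inner c → T c = 0) ∧
  (∀ c, InSkew outer inner c → 1 ≤ T c) ∧
  (∀ i j j', InSkew outer inner (i, j) → InSkew outer inner (i, j') → j ≤ j' →
    T (i, j) ≤ T (i, j')) ∧
  (∀ i j, InSkew outer inner (i, j) → InSkew outer inner (i + 1, j) → T (i, j) < T (i + 1, j))

/-- `T` has content `ρ`: the number of entries equal to `k+1` is `ρ k`. -/
def HasContent (T : ℕ × ℕ → ℕ) (ρ : ℕ → ℕ) : Prop :=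
  ∀ k : ℕ, Set.ncard {c : ℕ × ℕ | T c = k + 1} = ρ k

/-- The ballot (lattice word) condition on the reverse reading word of `T`. -/
def Ballot (T : ℕ × ℕ → ℕ) : Prop :=
  ∀ i j k : ℕ,
    Set.ncard {c : ℕ × ℕ | (c.1 < i ∨ (c.1 = i ∧ j ≤ c.2)) ∧ T c = k + 2} ≤
    Set.ncard {c : ℕ × ℕ | (c.1 < i ∨ (c.1 = i ∧ j ≤ c.2)) ∧ T c = k + 1}

/-- `T` is a Littlewood–Richardson tableau of the given skew shape and content `ρ`. -/
def IsLR (outer inner : ℕ → ℕ) (T : ℕ × ℕ → ℕ) (ρ : ℕ → ℕ) : Prop :=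
  IsSSYT outer inner T ∧ HasContent T ρ ∧ Ballot T

/-- `(L, T)` is a Littlewood–Richardson multitableau of shape `l`, contents
`ρ 0, …, ρ (r-1)` and type `π`: `L` is a chain `∅ = L 0 ⊆ L 1 ⊆ ⋯ ⊆ L r = l`
with `|L (i+1)/L i| = π i`, and `T i` is an LR tableau of shape `L (i+1)/L i`
and content `ρ i`.  (Data beyond index `r` is pinned down so that such pairs
can be counted.) -/
def IsLRMulti (l : YPartition) (r : ℕ) (π : ℕ → ℕ) (ρ : ℕ → ℕ → ℕ)
    (L : ℕ → YPartition) (T : ℕ → ℕ × ℕ → ℕ) : Prop :=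
  L 0 = pempty ∧ (∀ i, r ≤ i → L i = l) ∧ (∀ i, r ≤ i → T i = fun _ => 0) ∧
  (∀ i < r, ∀ n, (L i).parts n ≤ (L (i + 1)).parts n) ∧
  (∀ i < r, psize (L (i + 1)) = psize (L i) + π i) ∧
  (∀ i < r, IsLR (L (i + 1)).parts (L i).parts (T i) (ρ i))

/-- `lr(λ, μ; π)`: the number of pairs of Littlewood–Richardson multitableaux of
shapes `λ` and `μ`, the same (partition) contents, and type `π = (π 0, …, π (r-1))`. -/
noncomputable def lrcount (l mu : YPartition) (r : ℕ) (π : ℕ → ℕ) : ℕ :=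
  Set.ncard {x : (ℕ → ℕ → ℕ) × ((ℕ → YPartition) × (ℕ → ℕ × ℕ → ℕ)) ×
      ((ℕ → YPartition) × (ℕ → ℕ × ℕ → ℕ)) |
    (∀ i, r ≤ i → x.1 i = fun _ => 0) ∧
    (∀ i < r, ∀ ⦃a b : ℕ⦄, a ≤ b → x.1 i b ≤ x.1 i a) ∧
    IsLRMulti l r π x.1 x.2.1.1 x.2.1.2 ∧
    IsLRMulti mu r π x.1 x.2.2.1 x.2.2.2}

/-- The Kostka number `K_{κπ}`: the number of semistandard tableaux of shape `κ`
and content `π`. -/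
noncomputable def kostka (k : YPartition) (π : ℕ → ℕ) : ℕ :=
  Set.ncard {T : ℕ × ℕ → ℕ | IsSSYT k.parts (fun _ => 0) T ∧ HasContent T π}

/-!
Every `ρ(i)` is the content of an LR tableau inside `μ`, so it has at most `q = ℓ(μ)` parts;
hence every entry of `S` is at most `q` and no skew shape of the `λ`-chain contains a column
of length `q + 1`. So each step of the `λ`-chain adds at most `q` rows, and since `ℓ(λ) = qr`
each step adds exactly `q` rows: `ℓ(λ(i)) = qi`. The same column bound, by downward induction
on `i`, shows that `λ(i)` contains the `qi × λ_p` rectangle. Thus the `i`-th tableau of `S`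
contains a `q × λ_p` block in rows `qi, …, qi + q - 1`, whose columns must read `1, …, q`:
this gives `ρ(i)_q ≥ λ_p` and `ν_i ≥ qλ_p`. On the `μ` side the ballot condition puts every
entry `q` in row `q`, which therefore grows by at least `ρ(i)_q ≥ λ_p` at each of the `r` steps.
-/

open Finset

namespace YPartition

lemma lt_plength_iff (l : YPartition) {n : ℕ} : n < plength l ↔ l.parts n ≠ 0 := by
  unfold plength
  constructor
  · intro hn hzero
    have hsub : l.support_finite.toFinset ⊆ range n := by
      intro i hi
      rw [Set.Finite.mem_toFinset, Set.mem_ofPred_eq] at hi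
      rw [mem_range]
      by_contra! hni
      exact hi (Nat.eq_zero_of_le_zero (hzero ▸ l.antitone hni))
    have := card_le_card hsub
    rw [card_range] at this
    omega
  · intro hn
    have hsub : range (n + 1) ⊆ l.support_finite.toFinset := by
      intro i hi
      rw [Set.Finite.mem_toFinset, Set.mem_ofPred_eq]
      have := l.antitone (Nat.lt_succ_iff.mp (mem_range.mp hi))
      omega
    simpa using card_le_card hsub

lemma parts_eq_zero_of_plength_le (l : YPartition) {n : ℕ} (h : plength l ≤ n) :
    l.parts n = 0 := by
  by_contra hn
  exact absurd ((lt_plength_iff l).2 hn) (by omega)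

lemma psize_eq_sum_range (l : YPartition) {N : ℕ} (h : plength l ≤ N) :
    psize l = ∑ i ∈ range N, l.parts i := by
  refine sum_subset (fun i hi => ?_) (fun i _ hi => ?_)
  · rw [Set.Finite.mem_toFinset] at hi
    exact mem_range.2 (((lt_plength_iff l).2 hi).trans_le h)
  · simpa using hi

lemma plength_le_of_parts_le {l m : YPartition} (h : ∀ n, l.parts n ≤ m.parts n) :
    plength l ≤ plength m := by
  refine card_le_card fun i hi => ?_
  simp only [Set.Finite.mem_toFinset, Set.mem_ofPred_eq] at hi ⊢
  have := h i
  omega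

lemma plength_pempty : plength pempty = 0 := by
  simp [plength, pempty]

end YPartition

open YPartition

section Tableau

variable {outer : YPartition} {inner : ℕ → ℕ} {T : ℕ × ℕ → ℕ} {ρ : ℕ → ℕ}

lemma IsSSYT.inSkew_of_ne_zero {outer : ℕ → ℕ} (hT : IsSSYT outer inner T) {c : ℕ × ℕ}
    (hc : T c ≠ 0) : InSkew outer inner c := by
  by_contra hout
  exact hc (hT.1 c hout)

lemma IsSSYT.finite_fiber (hT : IsSSYT outer.parts inner T) {v : ℕ} (hv : v ≠ 0) :
    {c | T c = v}.Finite := by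
  refine ((Set.finite_Iio (plength outer)).prod (Set.finite_Iio (outer.parts 0))).subset ?_
  intro c hc
  have hskew := (hT.inSkew_of_ne_zero (c := c) (by rw [hc]; exact hv)).2
  exact ⟨(lt_plength_iff outer).2 (by omega),
    hskew.trans_le (outer.antitone (Nat.zero_le c.1))⟩

lemma IsSSYT.content_ne_zero (hT : IsSSYT outer.parts inner T) (hcont : HasContent T ρ)
    {c : ℕ × ℕ} {k : ℕ} (hc : T c = k + 1) : ρ k ≠ 0 := by
  rw [← hcont k]
  exact ((Set.ncard_pos (hT.finite_fiber k.succ_ne_zero)).2 ⟨c, hc⟩).ne'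

lemma IsSSYT.le_of_content_lt (hT : IsSSYT outer.parts inner T) (hcont : HasContent T ρ)
    {q : ℕ} (hρ : ∀ k, ρ k ≠ 0 → k < q) (c : ℕ × ℕ) : T c ≤ q := by
  rcases Nat.eq_zero_or_pos (T c) with hc | hc
  · omega
  · have := hρ _ (hT.content_ne_zero hcont (by omega : T c = T c - 1 + 1))
    omega

lemma IsSSYT.succ_le_of_column {outer : ℕ → ℕ} (hT : IsSSYT outer inner T) {n c k : ℕ}
    (h : ∀ j ≤ k, InSkew outer inner (n + j, c)) : k + 1 ≤ T (n + k, c) := by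
  induction k with
  | zero => exact hT.2.1 _ (h 0 le_rfl)
  | succ k ih =>
    have hstep : T (n + k, c) < T (n + (k + 1), c) :=
      hT.2.2.2 (n + k) c (h k (by omega)) (h (k + 1) le_rfl)
    have := ih fun j hj => h j (by omega)
    omega

lemma IsSSYT.not_column_of_content_lt (hT : IsSSYT outer.parts inner T)
    (hcont : HasContent T ρ) {q : ℕ} (hρ : ∀ k, ρ k ≠ 0 → k < q) {n c : ℕ} :
    ¬ ∀ j ≤ q, InSkew outer.parts inner (n + j, c) := fun h => by
  have := hT.succ_le_of_column h
  have := hT.le_of_content_lt hcont hρ (n + q, c)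
  omega

lemma IsSSYT.eq_of_column_of_content_lt (hT : IsSSYT outer.parts inner T)
    (hcont : HasContent T ρ) {k : ℕ} (hρ : ∀ k', ρ k' ≠ 0 → k' < k + 1) {n c : ℕ}
    (h : ∀ j ≤ k, InSkew outer.parts inner (n + j, c)) : T (n + k, c) = k + 1 :=
  le_antisymm (hT.le_of_content_lt hcont hρ _) (hT.succ_le_of_column h)

lemma Ballot.exists_prefix_of_eq (hb : Ballot T) (hT : IsSSYT outer.parts inner T)
    {i j k : ℕ} (h : T (i, j) = k + 2) :
    ∃ c : ℕ × ℕ, (c.1 < i ∨ (c.1 = i ∧ j ≤ c.2)) ∧ T c = k + 1 := by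
  have hfin : {c : ℕ × ℕ | (c.1 < i ∨ (c.1 = i ∧ j ≤ c.2)) ∧ T c = k + 2}.Finite :=
    (hT.finite_fiber (by omega : k + 2 ≠ 0)).subset fun c hc => hc.2
  have hpos := (Set.ncard_pos hfin).2 ⟨(i, j), Or.inr ⟨rfl, le_rfl⟩, h⟩
  exact Set.nonempty_of_ncard_ne_zero (hpos.trans_le (hb i j k)).ne'

lemma Ballot.le_fst_add_one (hb : Ballot T) (hT : IsSSYT outer.parts inner T) :
    ∀ c : ℕ × ℕ, T c ≤ c.1 + 1 := by
  rintro ⟨i, j⟩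
  induction i using Nat.strong_induction_on generalizing j with
  | _ i ih =>
    by_contra! hgt
    obtain ⟨⟨a, b⟩, hprefix, hab⟩ :=
      hb.exists_prefix_of_eq hT (i := i) (j := j) (k := T (i, j) - 2) (by omega)
    simp only at hprefix hab
    rcases hprefix with ha | ⟨rfl, hjb⟩
    · have := ih a ha b
      omega
    · have hrow := hT.2.2.1 a j b (hT.inSkew_of_ne_zero (by omega))
        (hT.inSkew_of_ne_zero (by omega)) hjb
      omega

lemma IsLR.lt_plength_of_content_ne_zero (h : IsLR outer.parts inner T ρ) {k : ℕ}
    (hk : ρ k ≠ 0) : k < plength outer := by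
  obtain ⟨hT, hcont, hb⟩ := h
  rw [← hcont k] at hk
  obtain ⟨c, hc : T c = k + 1⟩ := Set.nonempty_of_ncard_ne_zero hk
  have hskew := (hT.inSkew_of_ne_zero (c := c) (by omega)).2
  have hrow := hb.le_fst_add_one hT c
  have := (lt_plength_iff outer (n := c.1)).2 (by omega)
  omega

lemma IsLR.content_le_of_plength_le (h : IsLR outer.parts inner T ρ) {k : ℕ}
    (hk : plength outer ≤ k + 1) : ρ k ≤ outer.parts k - inner k := by
  obtain ⟨hT, hcont, hb⟩ := h
  have hsub : {c | T c = k + 1} ⊆ Prod.mk k '' Set.Ico (inner k) (outer.parts k) := by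
    rintro ⟨a, b⟩ hab
    simp only [Set.mem_ofPred_eq] at hab
    have hskew := hT.inSkew_of_ne_zero (c := (a, b)) (by omega)
    have hrow := hb.le_fst_add_one hT (a, b)
    have := (lt_plength_iff outer (n := a)).2 (by have := hskew.2; simp only at this; omega)
    obtain rfl : a = k := by simp only at hrow; omega
    exact ⟨b, hskew, rfl⟩
  calc ρ k = {c | T c = k + 1}.ncard := (hcont k).symm
    _ ≤ (Prod.mk k '' Set.Ico (inner k) (outer.parts k)).ncard :=
      Set.ncard_le_ncard hsub ((Set.finite_Ico _ _).image _)
    _ = outer.parts k - inner k := by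
      rw [Set.ncard_image_of_injective _ (Prod.mk_right_injective k), Set.ncard_Ico_nat]

end Tableau

namespace IsLRMulti

variable {l : YPartition} {r : ℕ} {π : ℕ → ℕ} {ρ : ℕ → ℕ → ℕ} {L : ℕ → YPartition}
  {T : ℕ → ℕ × ℕ → ℕ}

lemma isLR (h : IsLRMulti l r π ρ L T) {i : ℕ} (hi : i < r) :
    IsLR (L (i + 1)).parts (L i).parts (T i) (ρ i) :=
  h.2.2.2.2.2 i hi

lemma parts_le_parts_succ (h : IsLRMulti l r π ρ L T) {i : ℕ} (hi : i < r) (n : ℕ) :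
    (L i).parts n ≤ (L (i + 1)).parts n :=
  h.2.2.2.1 i hi n

lemma last_eq (h : IsLRMulti l r π ρ L T) : L r = l :=
  h.2.1 r le_rfl

lemma psize_succ (h : IsLRMulti l r π ρ L T) {i : ℕ} (hi : i < r) :
    psize (L (i + 1)) = psize (L i) + π i :=
  h.2.2.2.2.1 i hi

lemma parts_le (h : IsLRMulti l r π ρ L T) {i : ℕ} (hi : i ≤ r) (n : ℕ) :
    (L i).parts n ≤ l.parts n := by
  induction hi using Nat.decreasingInduction with
  | self => rw [h.last_eq]
  | of_succ i hi ih => exact (h.parts_le_parts_succ hi n).trans ih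

lemma content_lt_plength (h : IsLRMulti l r π ρ L T) {i k : ℕ} (hi : i < r)
    (hk : ρ i k ≠ 0) : k < plength l :=
  ((h.isLR hi).lt_plength_of_content_ne_zero hk).trans_le
    (plength_le_of_parts_le (h.parts_le hi))

/-- A step adding more than `q` rows has a column of length `q + 1` in its first column. -/
lemma plength_succ_le (h : IsLRMulti l r π ρ L T) {i q : ℕ} (hi : i < r)
    (hq : ∀ k, ρ i k ≠ 0 → k < q) : plength (L (i + 1)) ≤ plength (L i) + q := by
  obtain ⟨hT, hcont, -⟩ := h.isLR hi
  by_contra! hlong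
  refine hT.not_column_of_content_lt hcont hq (n := plength (L i)) (c := 0) fun j hj => ⟨?_, ?_⟩
  · exact ((L i).parts_eq_zero_of_plength_le (by omega)).le
  · exact Nat.pos_of_ne_zero ((lt_plength_iff _).1 (by omega))

lemma plength_le_add_mul (h : IsLRMulti l r π ρ L T) {q : ℕ}
    (hq : ∀ i < r, ∀ k, ρ i k ≠ 0 → k < q) {i j : ℕ} (hij : i ≤ j) (hj : j ≤ r) :
    plength (L j) ≤ plength (L i) + q * (j - i) := by
  induction j, hij using Nat.le_induction with
  | base => simp
  | succ j hij ih =>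
    have := h.plength_succ_le (by omega) (hq j (by omega))
    have := ih (by omega)
    rw [Nat.sub_add_comm hij, Nat.mul_succ]
    omega

lemma plength_eq_mul (h : IsLRMulti l r π ρ L T) {q : ℕ}
    (hq : ∀ i < r, ∀ k, ρ i k ≠ 0 → k < q) (hl : plength l = q * r) {i : ℕ} (hi : i ≤ r) :
    plength (L i) = q * i := by
  have hupper := h.plength_le_add_mul hq (Nat.zero_le i) hi
  have hlower := h.plength_le_add_mul hq hi le_rfl
  rw [h.1, plength_pempty, Nat.sub_zero, zero_add] at hupper
  rw [h.last_eq, hl] at hlower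
  have : q * r = q * i + q * (r - i) := by rw [← Nat.mul_add, Nat.add_sub_cancel' hi]
  omega

/-- Downward induction on `i`: a shorter row `n` of `L i` would start a column of `q + 1`
cells of `L (i + 1) / L i`. -/
lemma parts_mul_pred_le (h : IsLRMulti l r π ρ L T) {q : ℕ}
    (hq : ∀ i < r, ∀ k, ρ i k ≠ 0 → k < q) {i n : ℕ} (hi : i ≤ r) (hn : n < q * i) :
    l.parts (q * r - 1) ≤ (L i).parts n := by
  induction hi using Nat.decreasingInduction generalizing n with
  | self => exact h.last_eq ▸ l.antitone (by omega)
  | of_succ i hi ih =>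
    by_contra! hshort
    obtain ⟨hT, hcont, -⟩ := h.isLR hi
    refine hT.not_column_of_content_lt hcont (hq i hi) (n := n) (c := (L i).parts n)
      fun j hj => ⟨(L i).antitone (Nat.le_add_right n j), ?_⟩
    exact hshort.trans_le (ih (by rw [Nat.mul_succ]; omega))

lemma inSkew_block (h : IsLRMulti l r π ρ L T) {q : ℕ}
    (hq : ∀ i < r, ∀ k, ρ i k ≠ 0 → k < q) (hl : plength l = q * r) {i j c : ℕ} (hi : i < r)
    (hj : j < q) (hc : c < l.parts (q * r - 1)) :
    InSkew (L (i + 1)).parts (L i).parts (q * i + j, c) := by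
  refine ⟨?_, hc.trans_le (h.parts_mul_pred_le hq hi (by rw [Nat.mul_succ]; omega))⟩
  rw [(L i).parts_eq_zero_of_plength_le (by rw [h.plength_eq_mul hq hl hi.le]; omega)]
  exact Nat.zero_le c

lemma parts_mul_pred_le_content (h : IsLRMulti l r π ρ L T) {q : ℕ}
    (hq : ∀ i < r, ∀ k, ρ i k ≠ 0 → k < q) (hl : plength l = q * r) {i : ℕ} (hi : i < r) :
    l.parts (q * r - 1) ≤ ρ i (q - 1) := by
  obtain ⟨hT, hcont, -⟩ := h.isLR hi
  rcases Nat.eq_zero_or_pos q with rfl | hqpos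
  · rw [l.parts_eq_zero_of_plength_le (by simp [hl])]
    exact Nat.zero_le _
  have hρ : ∀ k, ρ i k ≠ 0 → k < q - 1 + 1 := by rw [Nat.sub_add_cancel hqpos]; exact hq i hi
  -- each column of the `q × λ_p` block reads `1, …, q`, so its bottom row consists of `q`s
  have hrow : Prod.mk (q * i + (q - 1)) '' Set.Iio (l.parts (q * r - 1)) ⊆
      {c | T i c = q - 1 + 1} := by
    rintro _ ⟨c, hc, rfl⟩
    exact hT.eq_of_column_of_content_lt hcont hρ fun j hj =>
      (add_assoc (q * i) j 0).symm ▸ h.inSkew_block hq hl hi (by omega) hc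
  calc l.parts (q * r - 1)
      = (Prod.mk (q * i + (q - 1)) '' Set.Iio (l.parts (q * r - 1))).ncard := by
        rw [Set.ncard_image_of_injective _ (Prod.mk_right_injective _), Set.ncard_Iio_nat]
    _ ≤ {c | T i c = q - 1 + 1}.ncard :=
        Set.ncard_le_ncard hrow (hT.finite_fiber (Nat.succ_ne_zero _))
    _ = ρ i (q - 1) := hcont (q - 1)

lemma mul_parts_mul_pred_le (h : IsLRMulti l r π ρ L T) {q : ℕ}
    (hq : ∀ i < r, ∀ k, ρ i k ≠ 0 → k < q) (hl : plength l = q * r) {i : ℕ} (hi : i < r) :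
    q * l.parts (q * r - 1) ≤ π i := by
  have hsize : psize (L i) + q * l.parts (q * r - 1) ≤ psize (L i) + π i :=
    calc psize (L i) + q * l.parts (q * r - 1)
        = ∑ n ∈ range (q * i), (L i).parts n + ∑ _j ∈ range q, l.parts (q * r - 1) := by
          rw [psize_eq_sum_range _ (h.plength_eq_mul hq hl hi.le).le, sum_const, card_range,
            smul_eq_mul]
      _ ≤ ∑ n ∈ range (q * i), (L (i + 1)).parts n +
            ∑ j ∈ range q, (L (i + 1)).parts (q * i + j) :=
          add_le_add (sum_le_sum fun n _ => h.parts_le_parts_succ hi n)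
            (sum_le_sum fun j hj => h.parts_mul_pred_le hq hi
              (by rw [mem_range] at hj; rw [Nat.mul_succ]; omega))
      _ = psize (L (i + 1)) := by
          rw [← sum_range_add, psize_eq_sum_range _ (h.plength_eq_mul hq hl hi).le, Nat.mul_succ]
      _ = psize (L i) + π i := h.psize_succ hi
  omega

lemma parts_add_content_le (h : IsLRMulti l r π ρ L T) {i k : ℕ} (hi : i < r)
    (hl : plength l ≤ k + 1) : (L i).parts k + ρ i k ≤ (L (i + 1)).parts k := by
  have := (h.isLR hi).content_le_of_plength_le
    ((plength_le_of_parts_le (h.parts_le hi)).trans hl)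
  have := h.parts_le_parts_succ hi k
  omega

lemma mul_le_parts_of_plength_le (h : IsLRMulti l r π ρ L T) {k a : ℕ}
    (hl : plength l ≤ k + 1) (ha : ∀ i < r, a ≤ ρ i k) : r * a ≤ l.parts k := by
  have hgrowth : ∀ i ≤ r, i * a ≤ (L i).parts k := by
    intro i hi
    induction i with
    | zero => simp
    | succ i ih =>
      have := h.parts_add_content_le (i := i) (by omega) hl
      have := ha i (by omega)
      have := ih (by omega)
      rw [Nat.succ_mul]
      omega
  exact h.last_eq ▸ hgrowth r le_rfl

end IsLRMulti

theorem lr_pair_structure_general (p q r : ℕ) (lam mu nu : YPartition)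
    (hlp : plength lam = p) (hlq : plength mu = q)
    (hpqr : p = q * r)
    (ρ : ℕ → ℕ → ℕ) (hρ : ∀ i < r, ∀ ⦃a b : ℕ⦄, a ≤ b → ρ i b ≤ ρ i a)
    (LS : ℕ → YPartition) (S : ℕ → ℕ × ℕ → ℕ)
    (LT : ℕ → YPartition) (T : ℕ → ℕ × ℕ → ℕ)
    (hS : IsLRMulti lam r nu.parts ρ LS S)
    (hT : IsLRMulti mu r nu.parts ρ LT T) :
    (∀ i < r, Set.ncard {j | ρ i j ≠ 0} = q ∧ ∀ j < q, lam.parts (p - 1) ≤ ρ i j) ∧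
    r * lam.parts (p - 1) ≤ mu.parts (q - 1) ∧
    q * lam.parts (p - 1) ≤ nu.parts (r - 1) := by
  subst hpqr
  have hq : ∀ i < r, ∀ k, ρ i k ≠ 0 → k < q := fun i hi k hk =>
    hlq ▸ hT.content_lt_plength hi hk
  have hcontent : ∀ i < r, lam.parts (q * r - 1) ≤ ρ i (q - 1) := fun i hi =>
    hS.parts_mul_pred_le_content hq hlp hi
  have hlower : ∀ i < r, ∀ j < q, lam.parts (q * r - 1) ≤ ρ i j := fun i hi j hj =>
    (hcontent i hi).trans (hρ i hi (by omega))
  refine ⟨fun i hi => ⟨?_, hlower i hi⟩, hT.mul_le_parts_of_plength_le (by omega) hcontent, ?_⟩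
  · have hsupport : {j | ρ i j ≠ 0} = Set.Iio q := by
      ext j
      refine ⟨hq i hi j, fun (hj : j < q) => ?_⟩
      have hqr : 0 < q * r := Nat.mul_pos (by omega) (by omega)
      have hpos : lam.parts (q * r - 1) ≠ 0 := (lt_plength_iff lam).1 (by omega)
      exact Nat.pos_iff_ne_zero.1 ((Nat.pos_of_ne_zero hpos).trans_le (hlower i hi j hj))
    rw [hsupport, Set.ncard_Iio_nat]
  · rcases Nat.eq_zero_or_pos r with rfl | hr
    · rw [lam.parts_eq_zero_of_plength_le (by simp [hlp]), mul_zero]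
      exact Nat.zero_le _
    · exact hS.mul_parts_mul_pred_le hq hlp (by omega)

/-- If `λ, μ, ν ⊢ m` have lengths exactly `p, q, r` with `p = qr` and `(S, T)` is a
pair of LR multitableaux of shapes `λ`, `μ`, same contents `ρ(1),…,ρ(r)` and type
`ν`, then every `ρ(i)` has length exactly `q` with all of its first `q` parts
`≥ λ_p`; moreover `μ_q ≥ r·λ_p` and `ν_r ≥ q·λ_p`. -/
theorem lr_pair_structure (m p q r : ℕ) (lam mu nu : YPartition)
    (hlam : psize lam = m) (hmu : psize mu = m) (hnu : psize nu = m)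
    (hlp : plength lam = p) (hlq : plength mu = q) (hlr : plength nu = r)
    (hpqr : p = q * r)
    (ρ : ℕ → ℕ → ℕ) (hρ : ∀ i < r, ∀ ⦃a b : ℕ⦄, a ≤ b → ρ i b ≤ ρ i a)
    (LS : ℕ → YPartition) (S : ℕ → ℕ × ℕ → ℕ)
    (LT : ℕ → YPartition) (T : ℕ → ℕ × ℕ → ℕ)
    (hS : IsLRMulti lam r nu.parts ρ LS S)
    (hT : IsLRMulti mu r nu.parts ρ LT T) :
    (∀ i < r, Set.ncard {j | ρ i j ≠ 0} = q ∧ ∀ j < q, lam.parts (p - 1) ≤ ρ i j) ∧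
    r * lam.parts (p - 1) ≤ mu.parts (q - 1) ∧
    q * lam.parts (p - 1) ≤ nu.parts (r - 1) :=
  lr_pair_structure_general p q r lam mu nu hlp hlq hpqr ρ hρ LS S LT T hS hT
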